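/- Let k, c, N_f, N_E be positive natural numbers, d ≥ 2 a real number, and λ a real number with 1 < λ < d satisfying (40·k²·c·N_f)^{1/((k+1)·N_f)} · d^{(8k(k+1)−1)/(8k(k+1))} < λ. Define δ := c·N_f·N_E·(d/λ)^{N_f·N_E·(k+1)}. Then (20·k²·(δ + 1/2))^{8k} < (40·k²·δ)^{8k} ≤ d^{N_f·N_E}. -/

import Mathlib

/-!
Put `A = 40 k² c N_f`, `x = d / λ` and `m = 8k`. Raising the hypothesis on `λ` to the power
`m (k + 1) N_f` gives `(A x^{(k+1) N_f})^m < d^{N_f}`. Since `δ ≥ 1`, the first inequality is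
just `δ + 1/2 < 2δ`. For the second, `40 k² δ = N_E · A · (x^{(k+1) N_f})^{N_E}` and
`N_E · A ≤ A^{N_E}` (as `A ≥ 2`), so `(40 k² δ)^m ≤ ((A x^{(k+1) N_f})^m)^{N_E} < d^{N_f N_E}`.
-/

lemma natCast_mul_le_pow {R : Type*} [CommSemiring R] [PartialOrder R] [IsOrderedRing R]
    {A : R} (hA : 2 ≤ A) : ∀ n : ℕ, (n : R) * A ≤ A ^ n
  | 0 => by simp
  | m + 1 => by
    have h2m : ((m + 1 : ℕ) : R) ≤ 2 ^ m := by
      simpa using Nat.mono_cast (α := R) (Nat.lt_two_pow_self (n := m))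
    rw [pow_succ]
    exact mul_le_mul_of_nonneg_right (h2m.trans (pow_le_pow_left₀ zero_le_two hA m))
      (zero_le_two.trans hA)

lemma mul_div_pow_lt_pow_of_rpow_mul_rpow_lt {A d lam : ℝ} {a b m : ℕ} (hA : 0 < A) (hd : 0 < d)
    (ha : 0 < a) (hb : 0 < b) (hm : 0 < m)
    (h : A ^ ((1 : ℝ) / (a * b)) * d ^ (((m * a : ℕ) - 1 : ℝ) / (m * a : ℕ)) < lam) :
    A ^ m * (d / lam) ^ (m * a * b) < d ^ b := by
  set r : ℝ := m * a * b with hr_def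
  have hr : 0 < r := by positivity
  have hlam : 0 < lam := lt_of_le_of_lt (by positivity) h
  have hraised : A ^ (m : ℝ) * d ^ (r - b) < lam ^ r := by
    have hexp₁ : (1 : ℝ) / (a * b) * r = m := by
      rw [hr_def]; field_simp
    have hexp₂ : ((m * a : ℕ) - 1 : ℝ) / (m * a : ℕ) * r = r - b := by
      rw [hr_def]; push_cast; field_simp
    have := Real.rpow_lt_rpow (by positivity) h hr
    rwa [Real.mul_rpow (by positivity) (by positivity), ← Real.rpow_mul hA.le,
      ← Real.rpow_mul hd.le, hexp₁, hexp₂] at this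
  have key : A ^ (m : ℝ) * (d / lam) ^ r < d ^ (b : ℝ) :=
    calc A ^ (m : ℝ) * (d / lam) ^ r = A ^ (m : ℝ) * d ^ r / lam ^ r := by
          rw [Real.div_rpow hd.le hlam.le, mul_div_assoc]
      _ < A ^ (m : ℝ) * d ^ r / (A ^ (m : ℝ) * d ^ (r - b)) :=
          div_lt_div_of_pos_left (by positivity) (by positivity) hraised
      _ = d ^ (b : ℝ) := by
          rw [mul_div_mul_left _ _ (by positivity), ← Real.rpow_sub hd, sub_sub_cancel]
  have hcast : ((m * a * b : ℕ) : ℝ) = r := by push_cast; rfl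
  simpa only [Real.rpow_natCast, ← hcast] using key

theorem stmt_9_general (k c Nf NE : ℕ) (hk : 1 ≤ k) (hc : 1 ≤ c) (hNf : 1 ≤ Nf) (hNE : 1 ≤ NE)
    (d lam δ : ℝ) (hlam1 : 1 < lam) (hlamd : lam < d)
    (hlam : (40 * (k : ℝ) ^ 2 * c * Nf) ^ ((1 : ℝ) / (((k : ℝ) + 1) * Nf)) *
      d ^ ((8 * (k : ℝ) * (k + 1) - 1) / (8 * (k : ℝ) * (k + 1))) < lam)
    (hδ : δ = c * Nf * NE * (d / lam) ^ (Nf * NE * (k + 1))) :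
    (20 * (k : ℝ) ^ 2 * (δ + 1 / 2)) ^ (8 * k) < (40 * (k : ℝ) ^ 2 * δ) ^ (8 * k) ∧
      (40 * (k : ℝ) ^ 2 * δ) ^ (8 * k) ≤ d ^ (Nf * NE) := by
  set A : ℝ := 40 * (k : ℝ) ^ 2 * c * Nf
  set x : ℝ := d / lam
  have hlam0 : 0 < lam := one_pos.trans hlam1
  have hx : 1 ≤ x := (one_le_div hlam0).2 hlamd.le
  have hk1 : (1 : ℝ) ≤ k := Nat.one_le_cast.2 hk
  have hA : 2 ≤ A := by
    have : (1 : ℝ) ≤ k ^ 2 * c * Nf :=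
      one_le_mul_of_one_le_of_one_le (one_le_mul_of_one_le_of_one_le (one_le_pow₀ hk1)
        (Nat.one_le_cast.2 hc)) (Nat.one_le_cast.2 hNf)
    linarith
  have hδ1 : 1 ≤ δ := hδ ▸ one_le_mul_of_one_le_of_one_le
    (by exact_mod_cast Nat.mul_pos (Nat.mul_pos hc hNf) hNE) (one_le_pow₀ hx)
  have hroot : A ^ (8 * k) * x ^ (8 * k * (k + 1) * Nf) < d ^ Nf :=
    mul_div_pow_lt_pow_of_rpow_mul_rpow_lt (by positivity) (hlam0.trans hlamd) (by omega)
      (by omega) (by omega) (by push_cast; exact hlam)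
  refine ⟨pow_lt_pow_left₀ (by nlinarith) (by positivity) (by omega), ?_⟩
  calc (40 * (k : ℝ) ^ 2 * δ) ^ (8 * k)
      = ((NE : ℝ) * A) ^ (8 * k) * (x ^ (8 * k * (k + 1) * Nf)) ^ NE := by
        rw [hδ]; ring
    _ ≤ (A ^ NE) ^ (8 * k) * (x ^ (8 * k * (k + 1) * Nf)) ^ NE := by
        gcongr; exact natCast_mul_le_pow hA NE
    _ = (A ^ (8 * k) * x ^ (8 * k * (k + 1) * Nf)) ^ NE := by ring
    _ ≤ (d ^ Nf) ^ NE := by gcongr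
    _ = d ^ (Nf * NE) := (pow_mul d Nf NE).symm

theorem stmt_9 (k c Nf NE : ℕ) (hk : 1 ≤ k) (hc : 1 ≤ c) (hNf : 1 ≤ Nf) (hNE : 1 ≤ NE)
    (d lam δ : ℝ) (hd : 2 ≤ d) (hlam1 : 1 < lam) (hlamd : lam < d)
    (hlam : (40 * (k : ℝ) ^ 2 * c * Nf) ^ ((1 : ℝ) / (((k : ℝ) + 1) * Nf)) *
      d ^ ((8 * (k : ℝ) * (k + 1) - 1) / (8 * (k : ℝ) * (k + 1))) < lam)
    (hδ : δ = c * Nf * NE * (d / lam) ^ (Nf * NE * (k + 1))) :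
    (20 * (k : ℝ) ^ 2 * (δ + 1 / 2)) ^ (8 * k) < (40 * (k : ℝ) ^ 2 * δ) ^ (8 * k) ∧
      (40 * (k : ℝ) ^ 2 * δ) ^ (8 * k) ≤ d ^ (Nf * NE) :=
  stmt_9_general k c Nf NE hk hc hNf hNE d lam δ hlam1 hlamd hlam hδ
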